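/- arXiv:1710.10884 — 2 statements merged into one kernel-verified Lean document; each statement's English description precedes it below -/
import Mathlib

section
/- Define ϑ̃(k,n) by ϑ̃(k,n) = ϑ₂(k − s₂(n), n) if k ≥ s₂(n), and 0 otherwise, where ϑ₂(j,n) counts t ∈ {0,…,n} with ν₂(C(n,t)) = j. Then for all k ≥ 0 and n ≥ 0 (with ϑ̃(k,n)=0 for k<0 or n<0): ϑ̃(k,2n) = ϑ̃(k,n) + ϑ̃(k−2,n−1) and ϑ̃(k,2n+1) = 2·ϑ̃(k−1,n), with ϑ̃(0,n) = δ_{0,n} and ϑ̃(k,0) = δ_{k,0}. -/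
/-- `s₂`, the binary sum-of-digits function. -/
def s2 (n : ℕ) : ℕ := (Nat.digits 2 n).sum

lemma s2_zero : s2 0 = 0 := by simp [s2]

lemma s2_rec (n : ℕ) (h : n ≠ 0) : s2 n = n % 2 + s2 (n / 2) := by
  unfold s2
  rw [Nat.digits_def' (by norm_num : 1 < 2) (Nat.pos_of_ne_zero h)]
  simp

lemma s2_two_mul (n : ℕ) : s2 (2 * n) = s2 n := by
  rcases Nat.eq_zero_or_pos n with rfl | h
  · simp
  · rw [s2_rec (2 * n) (by omega)]
    simp [Nat.mul_mod_right]

lemma s2_two_mul_add_one (n : ℕ) : s2 (2 * n + 1) = s2 n + 1 := by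
  rw [s2_rec (2 * n + 1) (by omega)]
  rw [Nat.mul_add_mod 2 n 1]
  have : (2 * n + 1) / 2 = n := by omega
  rw [this]; omega

lemma s2_eq_zero_iff (n : ℕ) : s2 n = 0 ↔ n = 0 := by
  induction n using Nat.strong_induction_on with
  | _ n ih =>
    rcases Nat.eq_zero_or_pos n with rfl | h
    · simp [s2_zero]
    · rw [s2_rec n (by omega)]
      rcases Nat.even_or_odd n with ⟨m, hm⟩ | ⟨m, hm⟩
      · subst hm
        have h2 : m + m = 2 * m := by ring
        rw [h2] at h ⊢
        have := ih m (by omega)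
        simp [Nat.mul_mod_right, Nat.mul_div_cancel_left _ (by norm_num : 0 < 2)]
        omega
      · subst hm; omega

lemma s2_add_le_aux (N : ℕ) : ∀ a b : ℕ, a + b ≤ N → s2 (a + b) ≤ s2 a + s2 b := by
  induction N using Nat.strong_induction_on with
  | _ N ihN =>
    intro a b hab
    have ih : ∀ m, m < N → ∀ a b : ℕ, a + b = m → s2 (a + b) ≤ s2 a + s2 b := by
      intro m hm a b h; exact ihN m hm a b (le_of_eq h)
    rcases Nat.eq_zero_or_pos (a + b) with h0 | h0
    · obtain ⟨rfl, rfl⟩ : a = 0 ∧ b = 0 := by omega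
      simp [s2_zero]
    have hN : a + b ≤ N := hab
    have hNpos : 0 < N := by omega
    obtain ⟨a', ra, ha, rfl⟩ : ∃ a' r, r < 2 ∧ a = 2 * a' + r := ⟨a / 2, a % 2, by omega, by omega⟩
    obtain ⟨b', rb, hb, rfl⟩ : ∃ b' r, r < 2 ∧ b = 2 * b' + r := ⟨b / 2, b % 2, by omega, by omega⟩
    interval_cases ra <;> interval_cases rb
    · have h2 : 2 * a' + 0 + (2 * b' + 0) = 2 * (a' + b') := by ring
      rw [h2, s2_two_mul]
      have := ih (a' + b') (by omega) a' b' rfl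
      simp only [add_zero, s2_two_mul]; omega
    · have h2 : 2 * a' + 0 + (2 * b' + 1) = 2 * (a' + b') + 1 := by ring
      rw [h2, s2_two_mul_add_one]
      have := ih (a' + b') (by omega) a' b' rfl
      simp only [add_zero, s2_two_mul, s2_two_mul_add_one]; omega
    · have h2 : 2 * a' + 1 + (2 * b' + 0) = 2 * (a' + b') + 1 := by ring
      rw [h2, s2_two_mul_add_one]
      have := ih (a' + b') (by omega) a' b' rfl
      simp only [add_zero, s2_two_mul, s2_two_mul_add_one]; omega
    · have h2 : 2 * a' + 1 + (2 * b' + 1) = 2 * (a' + b' + 1) := by ring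
      rw [h2, s2_two_mul]
      have h3 : a' + b' + 1 = (a' + b') + 1 := rfl
      have := ih (a' + b' + 1) (by omega) (a' + b') 1 rfl
      have h4 : s2 (a' + b') ≤ s2 a' + s2 b' := by
        rcases Nat.eq_zero_or_pos (a' + b') with hz | hz
        · obtain ⟨rfl, rfl⟩ : a' = 0 ∧ b' = 0 := by omega
          simp
        · exact ih (a' + b') (by omega) a' b' rfl
      have h5 : s2 1 = 1 := by simp [s2]
      simp only [s2_two_mul_add_one]
      omega

lemma s2_add_le (a b : ℕ) : s2 (a + b) ≤ s2 a + s2 b :=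
  s2_add_le_aux (a + b) a b le_rfl

lemma kummer2 {t n : ℕ} (h : t ≤ n) :
    s2 t + s2 (n - t) = padicValNat 2 (n.choose t) + s2 n := by
  have hfact : Fact (Nat.Prime 2) := ⟨Nat.prime_two⟩
  have hk := sub_one_mul_padicValNat_choose_eq_sub_sum_digits (p := 2) h
  have hle : s2 n ≤ s2 t + s2 (n - t) := by
    have := s2_add_le t (n - t)
    rwa [Nat.add_sub_cancel' h] at this
  unfold s2 at *
  omega

/-- `ϑ₂(j,n)`: the number of `t ∈ {0,…,n}` with `ν₂(C(n,t)) = j`. -/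
def theta2 (j n : ℕ) : ℕ :=
  ((Finset.range (n + 1)).filter (fun t => padicValNat 2 (n.choose t) = j)).card

/-- `ϑ̃(k,n) = ϑ₂(k − s₂(n), n)` if `k ≥ s₂(n)` (and `n ≥ 0`), else `0`. -/
def tth (k n : ℤ) : ℕ :=
  if 0 ≤ n ∧ (s2 n.toNat : ℤ) ≤ k then theta2 (k - s2 n.toNat).toNat n.toNat
  else 0

/-- The count of `t ∈ {0,…,n}` with `s₂(t) + s₂(n−t) = k`. -/
def F (k n : ℕ) : ℕ := ∑ t ∈ Finset.range (n + 1), (if s2 t + s2 (n - t) = k then 1 else 0)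

lemma sum_split (g : ℕ → ℕ) (n : ℕ) :
    ∑ t ∈ Finset.range (2 * n), g t
      = ∑ t ∈ Finset.range n, g (2 * t) + ∑ t ∈ Finset.range n, g (2 * t + 1) := by
  induction n with
  | zero => simp
  | succ n ih =>
    have h : 2 * (n + 1) = 2 * n + 1 + 1 := by ring
    rw [h, Finset.sum_range_succ, Finset.sum_range_succ, Finset.sum_range_succ,
      Finset.sum_range_succ, ih]
    ring

lemma tth_eq (k : ℤ) (n : ℕ) : tth k n = if 0 ≤ k then F k.toNat n else 0 := by
  unfold tth
  have hn : ((n : ℤ)).toNat = n := Int.toNat_natCast n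
  rw [hn]
  by_cases h : (s2 n : ℤ) ≤ k
  · have hk : 0 ≤ k := le_trans (by positivity) h
    rw [if_pos ⟨by positivity, h⟩, if_pos hk]
    unfold theta2 F
    rw [Finset.card_filter]
    apply Finset.sum_congr rfl
    intro t ht
    have ht' : t ≤ n := by simpa [Nat.lt_succ_iff] using Finset.mem_range.mp ht
    have hkum := kummer2 ht'
    refine if_congr ?_ rfl rfl
    omega
  · rw [if_neg (by tauto)]
    by_cases hk : 0 ≤ k
    · rw [if_pos hk]
      symm
      unfold F
      apply Finset.sum_eq_zero
      intro t ht
      have ht' : t ≤ n := by simpa [Nat.lt_succ_iff] using Finset.mem_range.mp ht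
      have hkum := kummer2 ht'
      rw [if_neg]
      omega
    · rw [if_neg hk]

lemma F_zero_right (k : ℕ) : F k 0 = if k = 0 then 1 else 0 := by
  unfold F
  rw [Finset.sum_range_one]
  simp [s2_zero, eq_comm]

lemma F_zero_left (n : ℕ) : F 0 n = if n = 0 then 1 else 0 := by
  rcases Nat.eq_zero_or_pos n with rfl | h
  · simp [F_zero_right]
  · rw [if_neg (by omega)]
    unfold F
    apply Finset.sum_eq_zero
    intro t ht
    have ht' : t ≤ n := by simpa [Nat.lt_succ_iff] using Finset.mem_range.mp ht
    have h1 : s2 n ≤ s2 t + s2 (n - t) := by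
      have := s2_add_le t (n - t)
      rwa [Nat.add_sub_cancel' ht'] at this
    have h2 : s2 n ≠ 0 := by rw [Ne, s2_eq_zero_iff]; omega
    rw [if_neg]
    omega

lemma F_even (k n : ℕ) :
    F k (2 * (n + 1)) = F k (n + 1) + (if 2 ≤ k then F (k - 2) n else 0) := by
  have heven : ∀ t ∈ Finset.range (n + 1),
      (if s2 (2 * t) + s2 (2 * (n + 1) - 2 * t) = k then (1:ℕ) else 0)
        = (if s2 t + s2 (n + 1 - t) = k then 1 else 0) := by
    intro t ht
    have ht' : t < n + 1 := Finset.mem_range.mp ht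
    have h2 : 2 * (n + 1) - 2 * t = 2 * (n + 1 - t) := by omega
    rw [h2, s2_two_mul, s2_two_mul]
  have hodd : ∀ t ∈ Finset.range (n + 1),
      (if s2 (2 * t + 1) + s2 (2 * (n + 1) - (2 * t + 1)) = k then (1:ℕ) else 0)
        = (if 2 ≤ k then (if s2 t + s2 (n - t) = k - 2 then 1 else 0) else 0) := by
    intro t ht
    have ht' : t < n + 1 := Finset.mem_range.mp ht
    have h2 : 2 * (n + 1) - (2 * t + 1) = 2 * (n - t) + 1 := by omega
    rw [h2, s2_two_mul_add_one, s2_two_mul_add_one]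
    by_cases hk : 2 ≤ k
    · rw [if_pos hk]
      refine if_congr ?_ rfl rfl
      omega
    · rw [if_neg hk, if_neg (by omega)]
  have E2 : ∑ t ∈ Finset.range (n + 1),
      (if s2 (2 * t + 1) + s2 (2 * (n + 1) - (2 * t + 1)) = k then (1:ℕ) else 0)
      = if 2 ≤ k then F (k - 2) n else 0 := by
    rw [Finset.sum_congr rfl hodd]
    unfold F
    split <;> simp
  have hlast : (if s2 (2 * (n + 1)) + s2 (2 * (n + 1) - 2 * (n + 1)) = k then (1:ℕ) else 0)
      = (if s2 (n + 1) + s2 (n + 1 - (n + 1)) = k then 1 else 0) := by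
    rw [Nat.sub_self, Nat.sub_self, s2_two_mul]
  calc F k (2 * (n + 1))
      = (∑ t ∈ Finset.range (2 * (n + 1)),
          (if s2 t + s2 (2 * (n + 1) - t) = k then (1:ℕ) else 0))
        + (if s2 (2 * (n + 1)) + s2 (2 * (n + 1) - 2 * (n + 1)) = k then 1 else 0) := by
        unfold F; rw [Finset.sum_range_succ]
    _ = (∑ t ∈ Finset.range (n + 1),
          (if s2 (2 * t) + s2 (2 * (n + 1) - 2 * t) = k then (1:ℕ) else 0))
        + (∑ t ∈ Finset.range (n + 1),
          (if s2 (2 * t + 1) + s2 (2 * (n + 1) - (2 * t + 1)) = k then (1:ℕ) else 0))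
        + (if s2 (2 * (n + 1)) + s2 (2 * (n + 1) - 2 * (n + 1)) = k then 1 else 0) := by
        rw [sum_split (fun t => if s2 t + s2 (2 * (n + 1) - t) = k then 1 else 0) (n + 1)]
    _ = (∑ t ∈ Finset.range (n + 1), (if s2 t + s2 (n + 1 - t) = k then (1:ℕ) else 0))
        + (if 2 ≤ k then F (k - 2) n else 0)
        + (if s2 (n + 1) + s2 (n + 1 - (n + 1)) = k then 1 else 0) := by
        rw [Finset.sum_congr rfl heven, E2, hlast]
    _ = F k (n + 1) + (if 2 ≤ k then F (k - 2) n else 0) := by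
        unfold F
        rw [Finset.sum_range_succ (fun t => if s2 t + s2 (n + 1 - t) = k then (1:ℕ) else 0)
          (n + 1)]
        omega

lemma F_odd (k n : ℕ) :
    F k (2 * n + 1) = 2 * (if 1 ≤ k then F (k - 1) n else 0) := by
  have heven : ∀ t ∈ Finset.range (n + 1),
      (if s2 (2 * t) + s2 (2 * n + 1 - 2 * t) = k then (1:ℕ) else 0)
        = (if 1 ≤ k then (if s2 t + s2 (n - t) = k - 1 then 1 else 0) else 0) := by
    intro t ht
    have ht' : t < n + 1 := Finset.mem_range.mp ht
    have h2 : 2 * n + 1 - 2 * t = 2 * (n - t) + 1 := by omega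
    rw [h2, s2_two_mul, s2_two_mul_add_one]
    by_cases hk : 1 ≤ k
    · rw [if_pos hk]
      refine if_congr ?_ rfl rfl
      omega
    · rw [if_neg hk, if_neg (by omega)]
  have hodd : ∀ t ∈ Finset.range (n + 1),
      (if s2 (2 * t + 1) + s2 (2 * n + 1 - (2 * t + 1)) = k then (1:ℕ) else 0)
        = (if 1 ≤ k then (if s2 t + s2 (n - t) = k - 1 then 1 else 0) else 0) := by
    intro t ht
    have ht' : t < n + 1 := Finset.mem_range.mp ht
    have h2 : 2 * n + 1 - (2 * t + 1) = 2 * (n - t) := by omega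
    rw [h2, s2_two_mul, s2_two_mul_add_one]
    by_cases hk : 1 ≤ k
    · rw [if_pos hk]
      refine if_congr ?_ rfl rfl
      omega
    · rw [if_neg hk, if_neg (by omega)]
  have hpull : ∑ t ∈ Finset.range (n + 1),
      (if 1 ≤ k then (if s2 t + s2 (n - t) = k - 1 then (1:ℕ) else 0) else 0)
      = if 1 ≤ k then F (k - 1) n else 0 := by
    unfold F; split <;> simp
  calc F k (2 * n + 1)
      = ∑ t ∈ Finset.range (2 * (n + 1)),
          (if s2 t + s2 (2 * n + 1 - t) = k then (1:ℕ) else 0) := by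
        unfold F
        have h : 2 * n + 1 + 1 = 2 * (n + 1) := by ring
        rw [h]
    _ = (∑ t ∈ Finset.range (n + 1),
          (if s2 (2 * t) + s2 (2 * n + 1 - 2 * t) = k then (1:ℕ) else 0))
        + (∑ t ∈ Finset.range (n + 1),
          (if s2 (2 * t + 1) + s2 (2 * n + 1 - (2 * t + 1)) = k then (1:ℕ) else 0)) := by
        rw [sum_split (fun t => if s2 t + s2 (2 * n + 1 - t) = k then 1 else 0) (n + 1)]
    _ = 2 * (if 1 ≤ k then F (k - 1) n else 0) := by
        rw [Finset.sum_congr rfl heven, Finset.sum_congr rfl hodd, hpull]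
        ring

lemma tth_nat (k n : ℕ) : tth k n = F k n := by
  rw [tth_eq, if_pos (by positivity), Int.toNat_natCast]

theorem tth_recurrence :
    (∀ n : ℕ, tth 0 n = if n = 0 then 1 else 0) ∧
    (∀ k : ℕ, tth k 0 = if k = 0 then 1 else 0) ∧
    (∀ k n : ℕ, tth k (2 * n) = tth k n + tth ((k : ℤ) - 2) ((n : ℤ) - 1)) ∧
    (∀ k n : ℕ, tth k (2 * n + 1) = 2 * tth ((k : ℤ) - 1) n) := by
  refine ⟨?_, ?_, ?_, ?_⟩
  · intro n
    rw [tth_eq, if_pos le_rfl, Int.toNat_zero, F_zero_left]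
  · intro k
    have h := tth_nat k 0
    rw [Nat.cast_zero] at h
    rw [h, F_zero_right]
  · intro k n
    rcases Nat.eq_zero_or_pos n with rfl | hn
    · simp only [Nat.cast_zero, mul_zero, zero_sub]
      have h2 : tth ((k : ℤ) - 2) (-1) = 0 := by
        unfold tth; rw [if_neg (by omega)]
      rw [h2, add_zero]
    · obtain ⟨m, rfl⟩ : ∃ m, n = m + 1 := ⟨n - 1, by omega⟩
      have hc1 : (2 : ℤ) * ((m + 1 : ℕ) : ℤ) = ((2 * (m + 1) : ℕ) : ℤ) := by push_cast; ring
      have hc2 : ((m + 1 : ℕ) : ℤ) - 1 = ((m : ℕ) : ℤ) := by push_cast; ring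
      rw [hc1, hc2, tth_nat, tth_nat]
      by_cases hk : 2 ≤ k
      · rw [show ((k : ℕ) : ℤ) - 2 = ((k - 2 : ℕ) : ℤ) by omega, tth_nat, F_even k m, if_pos hk]
      · have h2 : tth ((k : ℤ) - 2) ((m : ℕ) : ℤ) = 0 := by
          rw [tth_eq, if_neg (by omega)]
        rw [h2, F_even k m, if_neg hk, add_zero]
  · intro k n
    have hc : (2 : ℤ) * ((n : ℕ) : ℤ) + 1 = ((2 * n + 1 : ℕ) : ℤ) := by push_cast; ring
    rw [hc, tth_nat, F_odd]
    by_cases hk : 1 ≤ k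
    · rw [show ((k : ℕ) : ℤ) - 1 = ((k - 1 : ℕ) : ℤ) by omega, tth_nat, if_pos hk]
    · have h2 : tth ((k : ℤ) - 1) ((n : ℕ) : ℤ) = 0 := by
        rw [tth_eq, if_neg (by omega)]
      rw [h2, if_neg hk]
end

section
/- For every j ≥ 0, (1/N) ∑_{0 ≤ n < N} Θ₂(j,n)/(n+1) → 0 as N → ∞, where Θ₂(j,n) is the number of t ∈ {0,…,n} such that 2^{j+1} does not divide C(n,t). -/
open Filter

/-- `Θ₂(j,n)`: the number of `t ∈ {0,…,n}` with `2^(j+1) ∤ C(n,t)`. -/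
def bigTheta2 (j n : ℕ) : ℕ :=
  ((Finset.range (n + 1)).filter (fun t => ¬ 2 ^ (j + 1) ∣ n.choose t)).card

open Finset

def sd (n : ℕ) : ℕ := (Nat.digits 2 n).sum

lemma sd_bit (a r : ℕ) (hr : r < 2) : sd (2 * a + r) = sd a + r := by
  rcases Nat.eq_zero_or_pos (2 * a + r) with h | h
  · have ha : a = 0 := by omega
    have hr0 : r = 0 := by omega
    simp [ha, hr0, sd]
  · have h1 : (2 * a + r) % 2 = r := by omega
    have h2 : (2 * a + r) / 2 = a := by omega
    unfold sd
    rw [Nat.digits_def' (by norm_num : 1 < 2) h, h1, h2, List.sum_cons]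
    omega

lemma sd_two_mul (a : ℕ) : sd (2 * a) = sd a := by
  simpa using sd_bit a 0 (by norm_num)

lemma sd_two_mul_add_one (a : ℕ) : sd (2 * a + 1) = sd a + 1 :=
  sd_bit a 1 (by norm_num)

lemma sd_succ_le (n : ℕ) : sd (n + 1) ≤ sd n + 1 := by
  induction n using Nat.strong_induction_on with
  | _ n IH =>
    rcases Nat.even_or_odd n with ⟨a, ha⟩ | ⟨a, ha⟩
    · have ha' : n = 2 * a := by omega
      subst ha'
      rw [sd_two_mul_add_one, sd_two_mul]
    · subst ha
      have h1 : 2 * a + 1 + 1 = 2 * (a + 1) := by ring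
      rw [h1, sd_two_mul, sd_two_mul_add_one]
      have := IH a (by omega)
      omega

lemma sd_add_le_aux : ∀ n a b, a + b = n → sd (a + b) ≤ sd a + sd b := by
  intro n
  induction n using Nat.strong_induction_on with
  | _ n IH =>
    intro a b hn
    rcases Nat.eq_zero_or_pos n with h0 | h0
    · have : a = 0 ∧ b = 0 := by omega
      simp [this.1, this.2]
    obtain ⟨p, e, he, hp⟩ : ∃ p e, e < 2 ∧ a = 2 * p + e := ⟨a / 2, a % 2, by omega, by omega⟩
    obtain ⟨q, f, hf, hq⟩ : ∃ q f, f < 2 ∧ b = 2 * q + f := ⟨b / 2, b % 2, by omega, by omega⟩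
    subst hp hq
    rcases Nat.lt_or_ge (e + f) 2 with hef | hef
    · have h1 : 2 * p + e + (2 * q + f) = 2 * (p + q) + (e + f) := by ring
      rw [h1, sd_bit _ _ hef, sd_bit _ _ he, sd_bit _ _ hf]
      have := IH (p + q) (by omega) p q rfl
      omega
    · have hef2 : e = 1 ∧ f = 1 := by omega
      have h1 : 2 * p + e + (2 * q + f) = 2 * (p + q + 1) := by omega
      rw [h1, sd_two_mul, sd_bit _ _ he, sd_bit _ _ hf]
      have h2 := sd_succ_le (p + q)
      have := IH (p + q) (by omega) p q rfl
      omega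

lemma sum_range_two_mul (f : ℕ → ℕ) (M : ℕ) :
    ∑ t ∈ range (2 * M), f t = ∑ i ∈ range M, (f (2 * i) + f (2 * i + 1)) := by
  induction M with
  | zero => simp
  | succ M IH =>
    have h : 2 * (M + 1) = 2 * M + 1 + 1 := by ring
    rw [h, Finset.sum_range_succ, Finset.sum_range_succ, IH, Finset.sum_range_succ]
    ring

def Cf (j n : ℕ) : ℕ :=
  ((range (n + 1)).filter (fun t => sd t + sd (n - t) ≤ sd n + j)).card

def Df (j n : ℕ) : ℕ :=
  ((range n).filter (fun t => sd t + sd (n - 1 - t) + 1 ≤ sd n + j)).card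

lemma sd_zero : sd 0 = 0 := by simp [sd]

lemma Cf_zero (j : ℕ) : Cf j 0 = 1 := by
  simp [Cf, Finset.filter_true_of_mem, sd_zero]

lemma sd_add_le (a b : ℕ) : sd (a + b) ≤ sd a + sd b := sd_add_le_aux (a + b) a b rfl

lemma Df_zero (j : ℕ) : Df j 0 = 0 := by simp [Df]

lemma Cf_eq_sum (j n : ℕ) :
    Cf j n = ∑ t ∈ range (n + 1), if sd t + sd (n - t) ≤ sd n + j then 1 else 0 := by
  rw [Cf, Finset.card_filter]

lemma Df_eq_sum (j n : ℕ) :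
    Df j n = ∑ t ∈ range n, if sd t + sd (n - 1 - t) + 1 ≤ sd n + j then 1 else 0 := by
  rw [Df, Finset.card_filter]

lemma ite_le_ite {P Q : Prop} [Decidable P] [Decidable Q] (h : P → Q) :
    (if P then (1:ℕ) else 0) ≤ if Q then 1 else 0 := by
  split_ifs with h1 h2 <;> simp_all

lemma Cf_odd (j m : ℕ) : Cf j (2 * m + 1) ≤ 2 * Cf j m := by
  rw [Cf_eq_sum, Cf_eq_sum, show 2 * m + 1 + 1 = 2 * (m + 1) by ring, sum_range_two_mul,
    two_mul (∑ t ∈ range (m + 1), if sd t + sd (m - t) ≤ sd m + j then (1:ℕ) else 0),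
    ← Finset.sum_add_distrib]
  apply Finset.sum_le_sum
  intro i hi
  rw [Finset.mem_range] at hi
  have h1 : 2 * m + 1 - 2 * i = 2 * (m - i) + 1 := by omega
  have h2 : 2 * m + 1 - (2 * i + 1) = 2 * (m - i) := by omega
  simp only [h1, h2, sd_two_mul, sd_two_mul_add_one]
  exact Nat.add_le_add (ite_le_ite (by omega)) (ite_le_ite (by omega))

lemma Cf_even (j m : ℕ) : Cf (j + 1) (2 * m) ≤ Cf (j + 1) m + Df j m := by
  rw [Cf_eq_sum, Cf_eq_sum, Df_eq_sum, Finset.sum_range_succ (n := 2 * m),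
    sum_range_two_mul, Finset.sum_range_succ (n := m)]
  have key : ∑ i ∈ range m,
      ((if sd (2*i) + sd (2*m - 2*i) ≤ sd (2*m) + (j+1) then 1 else 0) +
       (if sd (2*i+1) + sd (2*m - (2*i+1)) ≤ sd (2*m) + (j+1) then 1 else 0)) ≤
      (∑ i ∈ range m, if sd i + sd (m - i) ≤ sd m + (j+1) then 1 else 0) +
       ∑ i ∈ range m, if sd i + sd (m - 1 - i) + 1 ≤ sd m + j then 1 else 0 := by
    rw [← Finset.sum_add_distrib]
    apply Finset.sum_le_sum
    intro i hi
    rw [Finset.mem_range] at hi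
    have h1 : 2 * m - 2 * i = 2 * (m - i) := by omega
    have h2 : 2 * m - (2 * i + 1) = 2 * (m - 1 - i) + 1 := by omega
    simp only [h1, h2, sd_two_mul, sd_two_mul_add_one]
    exact Nat.add_le_add (ite_le_ite (by omega)) (ite_le_ite (by omega))
  have hlast : (if sd (2*m) + sd (2*m - 2*m) ≤ sd (2*m) + (j+1) then (1:ℕ) else 0) ≤
      (if sd m + sd (m - m) ≤ sd m + (j+1) then 1 else 0) := by
    simp only [Nat.sub_self, sd_zero]
    exact ite_le_ite (by omega)
  omega

lemma Cf_even_zero (m : ℕ) : Cf 0 (2 * m) ≤ Cf 0 m := by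
  rw [Cf_eq_sum, Cf_eq_sum, Finset.sum_range_succ (n := 2 * m),
    sum_range_two_mul, Finset.sum_range_succ (n := m)]
  have key : ∑ i ∈ range m,
      ((if sd (2*i) + sd (2*m - 2*i) ≤ sd (2*m) + 0 then 1 else 0) +
       (if sd (2*i+1) + sd (2*m - (2*i+1)) ≤ sd (2*m) + 0 then 1 else 0)) ≤
      ∑ i ∈ range m, (if sd i + sd (m - i) ≤ sd m + 0 then 1 else 0) := by
    apply Finset.sum_le_sum
    intro i hi
    rw [Finset.mem_range] at hi
    have h1 : 2 * m - 2 * i = 2 * (m - i) := by omega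
    have h2 : 2 * m - (2 * i + 1) = 2 * (m - 1 - i) + 1 := by omega
    have h3 := sd_add_le i (m - 1 - i)
    rw [show i + (m - 1 - i) = m - 1 by omega] at h3
    have h4 := sd_succ_le (m - 1)
    rw [show m - 1 + 1 = m by omega] at h4
    simp only [h1, h2, sd_two_mul, sd_two_mul_add_one]
    have hno : ¬ (sd i + 1 + (sd (m - 1 - i) + 1) ≤ sd m + 0) := by omega
    rw [if_neg hno, add_zero]
  have hlast : (if sd (2*m) + sd (2*m - 2*m) ≤ sd (2*m) + 0 then (1:ℕ) else 0) ≤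
      (if sd m + sd (m - m) ≤ sd m + 0 then 1 else 0) := by
    simp only [Nat.sub_self, sd_zero]
    exact ite_le_ite (by omega)
  omega

lemma Df_even (j m : ℕ) : Df (j + 1) (2 * m) ≤ 2 * Df j m := by
  rw [Df_eq_sum, Df_eq_sum, sum_range_two_mul,
    two_mul (∑ t ∈ range m, if sd t + sd (m - 1 - t) + 1 ≤ sd m + j then (1:ℕ) else 0),
    ← Finset.sum_add_distrib]
  apply Finset.sum_le_sum
  intro i hi
  rw [Finset.mem_range] at hi
  have h1 : 2 * m - 1 - 2 * i = 2 * (m - 1 - i) + 1 := by omega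
  have h2 : 2 * m - 1 - (2 * i + 1) = 2 * (m - 1 - i) := by omega
  simp only [h1, h2, sd_two_mul, sd_two_mul_add_one]
  exact Nat.add_le_add (ite_le_ite (by omega)) (ite_le_ite (by omega))

lemma Df_even_zero (m : ℕ) : Df 0 (2 * m) = 0 := by
  rw [Df, Finset.card_eq_zero, Finset.filter_eq_empty_iff]
  intro t ht
  rw [Finset.mem_range] at ht
  have h3 := sd_add_le t (2 * m - 1 - t)
  rw [show t + (2 * m - 1 - t) = 2 * (m - 1) + 1 by omega, sd_two_mul_add_one] at h3
  have h4 := sd_succ_le (m - 1)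
  rw [show m - 1 + 1 = m by omega] at h4
  rw [sd_two_mul]
  omega

lemma Df_odd (j m : ℕ) : Df (j + 1) (2 * m + 1) ≤ Cf (j + 1) m + Df j m := by
  rw [Df_eq_sum, Cf_eq_sum, Df_eq_sum, Finset.sum_range_succ (n := 2 * m),
    sum_range_two_mul, Finset.sum_range_succ (n := m)]
  simp only [show 2 * m + 1 - 1 = 2 * m by omega]
  have key : ∑ i ∈ range m,
      ((if sd (2*i) + sd (2*m - 2*i) + 1 ≤ sd (2*m+1) + (j+1) then 1 else 0) +
       (if sd (2*i+1) + sd (2*m - (2*i+1)) + 1 ≤ sd (2*m+1) + (j+1) then 1 else 0)) ≤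
      (∑ i ∈ range m, if sd i + sd (m - i) ≤ sd m + (j+1) then 1 else 0) +
       ∑ i ∈ range m, if sd i + sd (m - 1 - i) + 1 ≤ sd m + j then 1 else 0 := by
    rw [← Finset.sum_add_distrib]
    apply Finset.sum_le_sum
    intro i hi
    rw [Finset.mem_range] at hi
    have h1 : 2 * m - 2 * i = 2 * (m - i) := by omega
    have h2 : 2 * m - (2 * i + 1) = 2 * (m - 1 - i) + 1 := by omega
    simp only [h1, h2, sd_two_mul, sd_two_mul_add_one]
    exact Nat.add_le_add (ite_le_ite (by omega)) (ite_le_ite (by omega))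
  have hlast : (if sd (2*m) + sd (2*m - 2*m) + 1 ≤ sd (2*m+1) + (j+1) then (1:ℕ) else 0) ≤
      (if sd m + sd (m - m) ≤ sd m + (j+1) then 1 else 0) := by
    simp only [Nat.sub_self, sd_zero, sd_two_mul, sd_two_mul_add_one]
    exact ite_le_ite (by omega)
  omega

lemma Df_odd_zero (m : ℕ) : Df 0 (2 * m + 1) ≤ Cf 0 m := by
  rw [Df_eq_sum, Cf_eq_sum, Finset.sum_range_succ (n := 2 * m),
    sum_range_two_mul, Finset.sum_range_succ (n := m)]
  simp only [show 2 * m + 1 - 1 = 2 * m by omega]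
  have key : ∑ i ∈ range m,
      ((if sd (2*i) + sd (2*m - 2*i) + 1 ≤ sd (2*m+1) + 0 then 1 else 0) +
       (if sd (2*i+1) + sd (2*m - (2*i+1)) + 1 ≤ sd (2*m+1) + 0 then 1 else 0)) ≤
      ∑ i ∈ range m, (if sd i + sd (m - i) ≤ sd m + 0 then 1 else 0) := by
    apply Finset.sum_le_sum
    intro i hi
    rw [Finset.mem_range] at hi
    have h1 : 2 * m - 2 * i = 2 * (m - i) := by omega
    have h2 : 2 * m - (2 * i + 1) = 2 * (m - 1 - i) + 1 := by omega
    have h3 := sd_add_le i (m - 1 - i)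
    rw [show i + (m - 1 - i) = m - 1 by omega] at h3
    have h4 := sd_succ_le (m - 1)
    rw [show m - 1 + 1 = m by omega] at h4
    simp only [h1, h2, sd_two_mul, sd_two_mul_add_one]
    have hno : ¬ (sd i + 1 + (sd (m - 1 - i) + 1) + 1 ≤ sd m + 1 + 0) := by omega
    rw [if_neg hno, add_zero]
    exact ite_le_ite (by omega)
  have hlast : (if sd (2*m) + sd (2*m - 2*m) + 1 ≤ sd (2*m+1) + 0 then (1:ℕ) else 0) ≤
      (if sd m + sd (m - m) ≤ sd m + 0 then 1 else 0) := by
    simp only [Nat.sub_self, sd_zero, sd_two_mul, sd_two_mul_add_one]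
    exact ite_le_ite (by omega)
  omega

lemma size_two_mul {m : ℕ} (hm : m ≠ 0) : Nat.size m + 1 ≤ Nat.size (2 * m) := by
  have h1 : 0 < Nat.size m := Nat.size_pos.2 (Nat.pos_of_ne_zero hm)
  have h2 : 2 ^ (Nat.size m - 1) ≤ m := Nat.lt_size.1 (by omega)
  have : Nat.size m < Nat.size (2 * m) := by
    apply Nat.lt_size.2
    calc 2 ^ Nat.size m = 2 * 2 ^ (Nat.size m - 1) := by
          rw [← pow_succ']
          congr 1
          omega
      _ ≤ 2 * m := by omega
  omega

lemma arith1 (S j : ℕ) : 4 ^ (j+1) * S ^ (j+1) + 4 ^ j * S ^ j ≤ 4 ^ (j+1) * (S+1) ^ (j+1) := by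
  have h : S ^ (j+1) + S ^ j ≤ (S+1) ^ (j+1) := by
    calc S ^ (j+1) + S ^ j = S ^ j * (S + 1) := by ring
      _ ≤ (S+1) ^ j * (S+1) := Nat.mul_le_mul_right _ (Nat.pow_le_pow_left (Nat.le_succ S) j)
      _ = (S+1) ^ (j+1) := by ring
  calc 4 ^ (j+1) * S ^ (j+1) + 4 ^ j * S ^ j
      ≤ 4 ^ (j+1) * S ^ (j+1) + 4 ^ (j+1) * S ^ j := by
        have : (4:ℕ) ^ j ≤ 4 ^ (j+1) := Nat.pow_le_pow_right (by norm_num) (by omega)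
        exact Nat.add_le_add_left (Nat.mul_le_mul_right _ this) _
    _ = 4 ^ (j+1) * (S ^ (j+1) + S ^ j) := by ring
    _ ≤ 4 ^ (j+1) * (S+1) ^ (j+1) := Nat.mul_le_mul_left _ h

lemma main_bound : ∀ n j, Cf j n ≤ 4 ^ j * (Nat.size n + 1) ^ j * 2 ^ (sd n) ∧
    Df j n ≤ 4 ^ j * (Nat.size n + 1) ^ j * 2 ^ (sd n) := by
  intro n
  induction n using Nat.strong_induction_on with
  | _ n IH =>
    intro j
    rcases Nat.eq_zero_or_pos n with h0 | h0
    · subst h0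
      constructor
      · rw [Cf_zero]
        have : 0 < 4 ^ j * (Nat.size 0 + 1) ^ j * 2 ^ sd 0 := by positivity
        omega
      · rw [Df_zero]
        exact Nat.zero_le _
    rcases Nat.even_or_odd n with ⟨m, hm⟩ | ⟨m, hm⟩
    · -- n = 2 * m, m ≥ 1
      have hm' : n = 2 * m := by omega
      subst hm'
      have hmpos : m ≠ 0 := by omega
      have hsz : Nat.size m + 1 + 1 ≤ Nat.size (2 * m) + 1 := by
        have := size_two_mul hmpos
        omega
      have hsd : sd (2 * m) = sd m := sd_two_mul m
      have IHm := IH m (by omega)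
      cases j with
      | zero =>
        constructor
        · calc Cf 0 (2 * m) ≤ Cf 0 m := Cf_even_zero m
            _ ≤ 4 ^ 0 * (Nat.size m + 1) ^ 0 * 2 ^ sd m := (IHm 0).1
            _ = 2 ^ sd m := by ring
            _ ≤ 4 ^ 0 * (Nat.size (2*m) + 1) ^ 0 * 2 ^ sd (2*m) := by
              rw [hsd]; ring_nf; omega
        · rw [Df_even_zero]
          exact Nat.zero_le _
      | succ j =>
        set S := Nat.size m + 1 with hS
        have hC := (IHm (j+1)).1
        have hCj := (IHm j).1
        have hD := (IHm j).2
        have hDs := (IHm (j+1)).2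
        have hkey : 4 ^ (j+1) * S ^ (j+1) * 2 ^ sd m + 4 ^ j * S ^ j * 2 ^ sd m ≤
            4 ^ (j+1) * (S + 1) ^ (j+1) * 2 ^ sd m := by
          have := arith1 S j
          calc 4 ^ (j+1) * S ^ (j+1) * 2 ^ sd m + 4 ^ j * S ^ j * 2 ^ sd m
              = (4 ^ (j+1) * S ^ (j+1) + 4 ^ j * S ^ j) * 2 ^ sd m := by ring
            _ ≤ 4 ^ (j+1) * (S+1) ^ (j+1) * 2 ^ sd m := Nat.mul_le_mul_right _ this
        have hmono : 4 ^ (j+1) * (S + 1) ^ (j+1) * 2 ^ sd m ≤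
            4 ^ (j+1) * (Nat.size (2*m) + 1) ^ (j+1) * 2 ^ sd (2*m) := by
          rw [hsd]
          exact Nat.mul_le_mul_right _ (Nat.mul_le_mul_left _
            (Nat.pow_le_pow_left (by omega) _))
        constructor
        · calc Cf (j+1) (2*m) ≤ Cf (j+1) m + Df j m := Cf_even j m
            _ ≤ 4 ^ (j+1) * S ^ (j+1) * 2 ^ sd m + 4 ^ j * S ^ j * 2 ^ sd m :=
              Nat.add_le_add hC hD
            _ ≤ 4 ^ (j+1) * (S + 1) ^ (j+1) * 2 ^ sd m := hkey
            _ ≤ _ := hmono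
        · calc Df (j+1) (2*m) ≤ 2 * Df j m := Df_even j m
            _ ≤ 2 * (4 ^ j * S ^ j * 2 ^ sd m) := Nat.mul_le_mul_left _ hD
            _ ≤ 4 ^ (j+1) * S ^ (j+1) * 2 ^ sd m + 4 ^ j * S ^ j * 2 ^ sd m := by
              have h1 : 4 ^ j * S ^ j * 2 ^ sd m ≤ 4 ^ (j+1) * S ^ (j+1) * 2 ^ sd m := by
                apply Nat.mul_le_mul_right
                calc 4 ^ j * S ^ j ≤ (4 * 4 ^ j) * S ^ j := by
                      apply Nat.mul_le_mul_right; omega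
                  _ ≤ (4 * 4 ^ j) * (S * S ^ j) := by
                      apply Nat.mul_le_mul_left
                      have : 1 ≤ S := by omega
                      calc S ^ j = 1 * S ^ j := by ring
                        _ ≤ S * S ^ j := Nat.mul_le_mul_right _ this
                  _ = 4 ^ (j+1) * S ^ (j+1) := by ring
              omega
            _ ≤ 4 ^ (j+1) * (S + 1) ^ (j+1) * 2 ^ sd m := hkey
            _ ≤ _ := hmono
    · -- n = 2 * m + 1
      subst hm
      have hsd : sd (2 * m + 1) = sd m + 1 := sd_two_mul_add_one m
      have hsz : Nat.size m + 1 ≤ Nat.size (2 * m + 1) + 1 := by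
        have := Nat.size_le_size (show m ≤ 2 * m + 1 by omega)
        omega
      have IHm := IH m (by omega)
      have hmono : ∀ k : ℕ, 4 ^ k * (Nat.size m + 1) ^ k * 2 ^ (sd m + 1) ≤
          4 ^ k * (Nat.size (2*m+1) + 1) ^ k * 2 ^ sd (2*m+1) := by
        intro k
        rw [hsd]
        exact Nat.mul_le_mul_right _ (Nat.mul_le_mul_left _ (Nat.pow_le_pow_left hsz _))
      constructor
      · calc Cf j (2*m+1) ≤ 2 * Cf j m := Cf_odd j m
          _ ≤ 2 * (4 ^ j * (Nat.size m + 1) ^ j * 2 ^ sd m) :=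
            Nat.mul_le_mul_left _ (IHm j).1
          _ = 4 ^ j * (Nat.size m + 1) ^ j * 2 ^ (sd m + 1) := by ring
          _ ≤ _ := hmono j
      · cases j with
        | zero =>
          calc Df 0 (2*m+1) ≤ Cf 0 m := Df_odd_zero m
            _ ≤ 4 ^ 0 * (Nat.size m + 1) ^ 0 * 2 ^ sd m := (IHm 0).1
            _ ≤ 4 ^ 0 * (Nat.size m + 1) ^ 0 * 2 ^ (sd m + 1) := by
              apply Nat.mul_le_mul_left
              exact Nat.pow_le_pow_right (by norm_num) (by omega)
            _ ≤ _ := hmono 0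
        | succ j =>
          calc Df (j+1) (2*m+1) ≤ Cf (j+1) m + Df j m := Df_odd j m
            _ ≤ 4 ^ (j+1) * (Nat.size m + 1) ^ (j+1) * 2 ^ sd m +
                4 ^ j * (Nat.size m + 1) ^ j * 2 ^ sd m :=
              Nat.add_le_add (IHm (j+1)).1 (IHm j).2
            _ ≤ 4 ^ (j+1) * (Nat.size m + 1) ^ (j+1) * 2 ^ sd m +
                4 ^ (j+1) * (Nat.size m + 1) ^ (j+1) * 2 ^ sd m := by
              have h1 : 4 ^ j * (Nat.size m + 1) ^ j ≤
                  4 ^ (j+1) * (Nat.size m + 1) ^ (j+1) :=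
                Nat.mul_le_mul (Nat.pow_le_pow_right (by norm_num) (by omega))
                  (Nat.pow_le_pow_right (by omega) (by omega))
              have := Nat.mul_le_mul_right (2 ^ sd m) h1
              omega
            _ = 4 ^ (j+1) * (Nat.size m + 1) ^ (j+1) * 2 ^ (sd m + 1) := by ring
            _ ≤ _ := hmono (j+1)

lemma bigTheta2_eq_Cf (j n : ℕ) : bigTheta2 j n = Cf j n := by
  unfold bigTheta2 Cf
  congr 1
  apply Finset.filter_congr
  intro t ht
  rw [Finset.mem_range] at ht
  have htn : t ≤ n := by omega
  have hpos : 0 < n.choose t := Nat.choose_pos htn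
  haveI : Fact (Nat.Prime 2) := ⟨Nat.prime_two⟩
  have hv := sub_one_mul_padicValNat_choose_eq_sub_sum_digits (p := 2) htn
  rw [show (2:ℕ) - 1 = 1 by norm_num, one_mul] at hv
  have hsd : padicValNat 2 (n.choose t) = sd t + sd (n - t) - sd n := hv
  constructor
  · intro h
    have hle : ¬ (j + 1 ≤ padicValNat 2 (n.choose t)) := fun hc =>
      h ((padicValNat_dvd_iff_le hpos.ne').2 hc)
    omega
  · intro h hdvd
    have := (padicValNat_dvd_iff_le hpos.ne').1 hdvd
    omega

lemma sd_pow_add : ∀ k i, i < 2 ^ k → sd (2 ^ k + i) = sd i + 1 := by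
  intro k
  induction k with
  | zero =>
    intro i hi
    interval_cases i
    show sd 1 = sd 0 + 1
    rw [show (1:ℕ) = 2 * 0 + 1 by norm_num, sd_bit 0 1 (by norm_num)]
  | succ k IHk =>
    intro i hi
    have hpow : (2:ℕ) ^ (k+1) = 2 * 2 ^ k := by ring
    have h2 : 2 ^ (k+1) + i = 2 * (2 ^ k + i / 2) + i % 2 := by omega
    rw [h2, sd_bit _ _ (by omega), IHk (i/2) (by omega)]
    have hi2 : sd i = sd (i/2) + i % 2 := by
      conv_lhs => rw [show i = 2 * (i/2) + i % 2 by omega]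
      rw [sd_bit _ _ (by omega)]
    omega

lemma sum_pow_sd : ∀ K : ℕ, ∑ n ∈ Finset.range (2 ^ K), 2 ^ sd n = 3 ^ K := by
  intro K
  induction K with
  | zero => simp [sd_zero]
  | succ K IH =>
    have h2 : (2:ℕ) ^ K ≤ 2 ^ (K+1) := Nat.pow_le_pow_right (by norm_num) (by omega)
    rw [Finset.range_eq_Ico, ← Finset.sum_Ico_consecutive _ (Nat.zero_le _) h2,
      ← Finset.range_eq_Ico, IH, Finset.sum_Ico_eq_sum_range]
    have h3 : 2 ^ (K+1) - 2 ^ K = 2 ^ K := by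
      have : (2:ℕ) ^ (K+1) = 2 * 2 ^ K := by ring
      omega
    rw [h3]
    have hcg : ∀ i ∈ range (2 ^ K), 2 ^ sd (2 ^ K + i) = 2 * 2 ^ sd i := by
      intro i hi
      rw [Finset.mem_range] at hi
      rw [sd_pow_add K i hi]
      ring
    rw [Finset.sum_congr rfl hcg, ← Finset.mul_sum, IH]
    ring

lemma sumR : ∀ K : ℕ, ∑ n ∈ Finset.range (2 ^ K), (2:ℝ) ^ sd n / (n + 1) ≤ 4 * (3/2) ^ K := by
  intro K
  induction K with
  | zero => norm_num [sd_zero]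
  | succ K IH =>
    have h2 : (2:ℕ) ^ K ≤ 2 ^ (K+1) := Nat.pow_le_pow_right (by norm_num) (by omega)
    rw [Finset.range_eq_Ico, ← Finset.sum_Ico_consecutive _ (Nat.zero_le _) h2,
      ← Finset.range_eq_Ico, Finset.sum_Ico_eq_sum_range]
    have h3 : 2 ^ (K+1) - 2 ^ K = 2 ^ K := by
      have : (2:ℕ) ^ (K+1) = 2 * 2 ^ K := by ring
      omega
    rw [h3]
    have hcast : ∑ n ∈ Finset.range (2 ^ K), (2:ℝ) ^ sd n = 3 ^ K := by
      calc ∑ n ∈ Finset.range (2 ^ K), (2:ℝ) ^ sd n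
          = ((∑ n ∈ Finset.range (2 ^ K), 2 ^ sd n : ℕ) : ℝ) := by push_cast; rfl
        _ = 3 ^ K := by rw [sum_pow_sd]; push_cast; rfl
    have hb : ∑ i ∈ Finset.range (2 ^ K), (2:ℝ) ^ sd (2 ^ K + i) / (↑(2 ^ K + i) + 1) ≤
        2 * (3/2) ^ K := by
      have hterm : ∀ i ∈ Finset.range (2 ^ K),
          (2:ℝ) ^ sd (2 ^ K + i) / (↑(2 ^ K + i) + 1) ≤ (2 / 2 ^ K) * 2 ^ sd i := by
        intro i hi
        rw [Finset.mem_range] at hi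
        have hden : (2:ℝ) ^ K ≤ (↑(2 ^ K + i) + 1) := by
          push_cast
          have := Nat.cast_nonneg (α := ℝ) i
          linarith
        rw [sd_pow_add K i hi, pow_succ,
          show (2 / (2:ℝ) ^ K) * 2 ^ sd i = (2:ℝ) ^ sd i * 2 / 2 ^ K by ring]
        gcongr
      calc ∑ i ∈ Finset.range (2 ^ K), (2:ℝ) ^ sd (2 ^ K + i) / (↑(2 ^ K + i) + 1)
          ≤ ∑ i ∈ Finset.range (2 ^ K), (2 / 2 ^ K) * (2:ℝ) ^ sd i :=
            Finset.sum_le_sum hterm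
        _ = (2 / 2 ^ K) * ∑ i ∈ Finset.range (2 ^ K), (2:ℝ) ^ sd i := by
            rw [Finset.mul_sum]
        _ = (2 / 2 ^ K) * 3 ^ K := by rw [hcast]
        _ = 2 * (3/2) ^ K := by
            rw [div_pow]
            field_simp
    calc (∑ n ∈ Finset.range (2 ^ K), (2:ℝ) ^ sd n / (↑n + 1)) +
          ∑ i ∈ Finset.range (2 ^ K), (2:ℝ) ^ sd (2 ^ K + i) / (↑(2 ^ K + i) + 1)
        ≤ 4 * (3/2) ^ K + 2 * (3/2) ^ K := add_le_add IH hb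
      _ = 4 * (3/2) ^ (K+1) := by ring

theorem singmaster_average (j : ℕ) :
    Tendsto
      (fun N : ℕ => (1 / N : ℝ) *
        ∑ n ∈ Finset.range N, (bigTheta2 j n : ℝ) / (n + 1))
      atTop (nhds 0) := by
  set φ : ℕ → ℝ := fun K => 8 * 4 ^ j * ((K : ℝ) + 1) ^ j * (3/4 : ℝ) ^ K with hφ
  have hφ0 : Tendsto (fun K : ℕ => ((K : ℝ) + 1) ^ j * (3/4 : ℝ) ^ K) atTop (nhds 0) := by
    have h1 : Tendsto (fun K : ℕ => ((K : ℝ)) ^ j * (3/4 : ℝ) ^ K) atTop (nhds 0) :=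
      tendsto_pow_const_mul_const_pow_of_lt_one j (by norm_num) (by norm_num)
    have h2 := h1.comp (tendsto_add_atTop_nat 1)
    have h3 := h2.const_mul ((4:ℝ)/3)
    rw [mul_zero] at h3
    apply h3.congr
    intro K
    simp only [Function.comp]
    push_cast
    ring
  have hφt : Tendsto φ atTop (nhds 0) := by
    have h4 := hφ0.const_mul ((8:ℝ) * 4 ^ j)
    rw [mul_zero] at h4
    apply h4.congr
    intro K
    rw [hφ]
    ring
  have hsz : Tendsto (fun N : ℕ => Nat.size N) atTop atTop := by
    apply Filter.tendsto_atTop_atTop.2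
    intro b
    exact ⟨2 ^ b, fun n hn => (Nat.lt_size.2 hn).le⟩
  apply squeeze_zero' (f := fun N : ℕ => (1 / N : ℝ) *
      ∑ n ∈ Finset.range N, (bigTheta2 j n : ℝ) / (n + 1))
    (g := φ ∘ fun N : ℕ => Nat.size N) ?_ ?_ (hφt.comp hsz)
  · apply Filter.Eventually.of_forall
    intro N
    positivity
  · filter_upwards [Filter.eventually_ge_atTop 1] with N hN
    set K := Nat.size N with hK
    have hK1 : 1 ≤ K := Nat.size_pos.2 (by omega)
    have hNlt : N < 2 ^ K := Nat.lt_size_self N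
    have hsum1 : ∑ n ∈ Finset.range N, (bigTheta2 j n : ℝ) / (n + 1) ≤
        ∑ n ∈ Finset.range (2 ^ K), (bigTheta2 j n : ℝ) / (n + 1) := by
      apply Finset.sum_le_sum_of_subset_of_nonneg
      · exact Finset.range_subset_range.2 hNlt.le
      · intro n _ _
        positivity
    have hsum2 : ∑ n ∈ Finset.range (2 ^ K), (bigTheta2 j n : ℝ) / (n + 1) ≤
        ∑ n ∈ Finset.range (2 ^ K),
          ((4:ℝ) ^ j * ((K : ℝ) + 1) ^ j) * ((2:ℝ) ^ sd n / (n + 1)) := by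
      apply Finset.sum_le_sum
      intro n hn
      rw [Finset.mem_range] at hn
      have hnb : bigTheta2 j n ≤ 4 ^ j * (K + 1) ^ j * 2 ^ sd n := by
        rw [bigTheta2_eq_Cf]
        calc Cf j n ≤ 4 ^ j * (Nat.size n + 1) ^ j * 2 ^ sd n := (main_bound n j).1
          _ ≤ 4 ^ j * (K + 1) ^ j * 2 ^ sd n := by
            have hsn : Nat.size n ≤ K := Nat.size_le.2 hn
            exact Nat.mul_le_mul_right _ (Nat.mul_le_mul_left _
              (Nat.pow_le_pow_left (by omega) _))
      rw [← mul_div_assoc]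
      gcongr ?_ / ?_
      · calc (bigTheta2 j n : ℝ)
            ≤ ((4 ^ j * (K + 1) ^ j * 2 ^ sd n : ℕ) : ℝ) := by exact_mod_cast hnb
          _ = (4:ℝ) ^ j * ((K : ℝ) + 1) ^ j * (2:ℝ) ^ sd n := by push_cast; ring
    have hsum3 : ∑ n ∈ Finset.range (2 ^ K),
        ((4:ℝ) ^ j * ((K : ℝ) + 1) ^ j) * ((2:ℝ) ^ sd n / (n + 1)) ≤
        ((4:ℝ) ^ j * ((K : ℝ) + 1) ^ j) * (4 * (3/2) ^ K) := by
      rw [← Finset.mul_sum]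
      apply mul_le_mul_of_nonneg_left (sumR K)
      positivity
    have hNK : (2:ℝ) ^ K ≤ 2 * N := by
      have hn1 : 2 ^ (K - 1) ≤ N := Nat.lt_size.1 (by omega)
      have hn2 : (2:ℕ) ^ K ≤ 2 * N := by
        calc (2:ℕ) ^ K = 2 * 2 ^ (K - 1) := by
              rw [← pow_succ']
              congr 1
              omega
          _ ≤ 2 * N := by omega
      exact_mod_cast hn2
    have hinv : (1 / N : ℝ) ≤ 2 / 2 ^ K := by
      rw [div_le_div_iff₀ (by positivity) (by positivity)]
      calc (1:ℝ) * 2 ^ K = 2 ^ K := by ring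
        _ ≤ 2 * N := hNK
        _ = 2 * N := rfl
    have hfinal : (1 / N : ℝ) * ∑ n ∈ Finset.range N, (bigTheta2 j n : ℝ) / (n + 1) ≤
        (2 / 2 ^ K) * (((4:ℝ) ^ j * ((K : ℝ) + 1) ^ j) * (4 * (3/2) ^ K)) := by
      have hs : ∑ n ∈ Finset.range N, (bigTheta2 j n : ℝ) / (n + 1) ≤
          ((4:ℝ) ^ j * ((K : ℝ) + 1) ^ j) * (4 * (3/2) ^ K) :=
        le_trans hsum1 (le_trans hsum2 hsum3)
      calc (1 / N : ℝ) * ∑ n ∈ Finset.range N, (bigTheta2 j n : ℝ) / (n + 1)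
          ≤ (1 / N : ℝ) * (((4:ℝ) ^ j * ((K : ℝ) + 1) ^ j) * (4 * (3/2) ^ K)) := by
            apply mul_le_mul_of_nonneg_left hs
            positivity
        _ ≤ (2 / 2 ^ K) * (((4:ℝ) ^ j * ((K : ℝ) + 1) ^ j) * (4 * (3/2) ^ K)) := by
            apply mul_le_mul_of_nonneg_right hinv
            positivity
    have heq : (2 / (2:ℝ) ^ K) * (((4:ℝ) ^ j * ((K : ℝ) + 1) ^ j) * (4 * (3/2) ^ K)) =
        φ K := by
      simp only [hφ]
      have hq : (3/4 : ℝ) ^ K = (3/2) ^ K * (1/2) ^ K := by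
        rw [← mul_pow]
        norm_num
      rw [hq, one_div_pow]
      field_simp
      ring
    calc (1 / N : ℝ) * ∑ n ∈ Finset.range N, (bigTheta2 j n : ℝ) / (n + 1)
        ≤ (2 / 2 ^ K) * (((4:ℝ) ^ j * ((K : ℝ) + 1) ^ j) * (4 * (3/2) ^ K)) := hfinal
      _ = φ K := heq
      _ = (φ ∘ fun N : ℕ => Nat.size N) N := rfl
end
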